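/- arXiv:1011.5723 — 8 statements merged into one kernel-verified Lean document; each statement's English description precedes it below -/
import Mathlib

section
/- Let p be a positive integer and let a, b be positive real numbers. Then the polynomial f(r) = r^p − a·r^(p−1) − b has exactly one positive real root r₁, and this root satisfies a ≤ r₁ ≤ a + b^(1/p). -/
/-!
Since `p ≥ 1`, `f r = r^(p-1) (r - a) - b`. The map `r ↦ r^(p-1) (r - a)` is nonpositive on
`(0, a]` and strictly increasing on `[a, ∞)`, so `f` has at most one positive root, and it lies
above `a`. With `c = b^(1/p)` we get `f a = -b < 0` and `f (a + c) ≥ c^(p-1) c - b = 0`, so the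
intermediate value theorem places the root in `[a, a + c]`.
-/

open Set

lemma pow_sub_mul_pow_pred_eq {R : Type*} [CommRing R] {p : ℕ} (hp : 0 < p) (a r : R) :
    r ^ p - a * r ^ (p - 1) = r ^ (p - 1) * (r - a) := by
  obtain ⟨n, rfl⟩ := Nat.exists_eq_add_one_of_ne_zero hp.ne'
  rw [Nat.add_sub_cancel, pow_succ]
  ring

section PowMulSub

variable {R : Type*} [Field R] [LinearOrder R] [IsStrictOrderedRing R] {a : R}

lemma strictMonoOn_pow_mul_sub (ha : 0 ≤ a) (n : ℕ) :
    StrictMonoOn (fun r : R => r ^ n * (r - a)) (Ici a) := by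
  intro r hr s _ hrs
  have hr0 : 0 ≤ r := ha.trans hr
  exact mul_lt_mul' (pow_le_pow_left₀ hr0 hrs.le n) (sub_lt_sub_right hrs a)
    (sub_nonneg.mpr hr) (pow_pos (hr0.trans_lt hrs) n)

lemma lt_of_pow_mul_sub_eq_of_pos {n : ℕ} {b r : R} (hb : 0 < b) (hr : 0 < r)
    (h : r ^ n * (r - a) = b) : a < r := by
  by_contra! hra
  have : r ^ n * (r - a) ≤ 0 :=
    mul_nonpos_of_nonneg_of_nonpos (pow_nonneg hr.le n) (sub_nonpos.mpr hra)
  exact (h ▸ this).not_gt hb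

end PowMulSub

lemma exists_mem_Icc_pow_mul_sub_eq_pow_succ {a c : ℝ} (ha : 0 ≤ a) (hc : 0 ≤ c) (n : ℕ) :
    ∃ r ∈ Icc a (a + c), r ^ n * (r - a) = c ^ (n + 1) := by
  have hcont : ContinuousOn (fun r : ℝ => r ^ n * (r - a)) (Icc a (a + c)) := by fun_prop
  have hleft : a ^ n * (a - a) ≤ c ^ (n + 1) := by
    rw [sub_self, mul_zero]
    positivity
  have hright : c ^ (n + 1) ≤ (a + c) ^ n * (a + c - a) := by
    rw [add_sub_cancel_left, pow_succ]
    gcongr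
    linarith
  exact intermediate_value_Icc (by linarith) hcont ⟨hleft, hright⟩

/-- For a positive integer `p` and positive reals `a`, `b`, the polynomial
`f(r) = r^p - a*r^(p-1) - b` has exactly one positive real root `r₁`,
and it satisfies `a ≤ r₁ ≤ a + b^(1/p)`. -/
theorem stmt0 (p : ℕ) (hp : 0 < p) (a b : ℝ) (ha : 0 < a) (hb : 0 < b) :
    ∃ r₁ : ℝ, (0 < r₁ ∧ r₁ ^ p - a * r₁ ^ (p - 1) - b = 0) ∧
      (∀ r : ℝ, 0 < r → r ^ p - a * r ^ (p - 1) - b = 0 → r = r₁) ∧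
      a ≤ r₁ ∧ r₁ ≤ a + b ^ (1 / (p : ℝ)) := by
  have hcp : (b ^ (1 / (p : ℝ))) ^ p = b := by
    rw [one_div]
    exact Real.rpow_inv_natCast_pow hb.le hp.ne'
  simp only [pow_sub_mul_pow_pred_eq hp, sub_eq_zero]
  obtain ⟨r₁, ⟨har₁, hr₁c⟩, hr₁⟩ :=
    exists_mem_Icc_pow_mul_sub_eq_pow_succ ha.le (by positivity : 0 ≤ b ^ (1 / (p : ℝ))) (p - 1)
  rw [Nat.sub_add_cancel hp, hcp] at hr₁
  have hr₁pos : 0 < r₁ := ha.trans_le har₁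
  refine ⟨r₁, ⟨hr₁pos, hr₁⟩, fun r hr hroot => ?_, har₁, hr₁c⟩
  exact (strictMonoOn_pow_mul_sub ha.le (p - 1)).injOn
    (lt_of_pow_mul_sub_eq_of_pos hb hr hroot).le har₁ (hroot.trans hr₁.symm)
end

section
/- Let k ≥ 2 be an integer and let A and B be trace-free symmetric k-linear forms on V. Then for all v, w ∈ V there holds Σ_{(a₁,…,a_{k−1}) ∈ {1,2}^{k−1}} [ A(e_{a₁},…,e_{a_{k−1}}, v)·B(e_{a₁},…,e_{a_{k−1}}, w) + A(e_{a₁},…,e_{a_{k−1}}, w)·B(e_{a₁},…,e_{a_{k−1}}, v) ] = ⟨A,B⟩·⟨v,w⟩. -/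
/-!
Both sides are bilinear in `(v, w)`, so it suffices to take `v = e p` and `w = e q`. Fixing all
but two arguments of `A` and `B` at basis vectors gives symmetric trace-free `2 × 2` matrices
`F` and `G`, and for those `F * G + G * F = ⟨F, G⟩ • 1`; summing over the fixed arguments gives
`δ_pq ⟨A, B⟩`.
-/

theorem Matrix.sum_mul_add_mul_eq_ite_of_isSymm_of_trace_eq_zero {R : Type*} [CommRing R]
    {F G : Matrix (Fin 2) (Fin 2) R} (hF : F.IsSymm) (hG : G.IsSymm)
    (hFtr : F.trace = 0) (hGtr : G.trace = 0) (p q : Fin 2) :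
    ∑ j, (F p j * G q j + F q j * G p j) = if p = q then ∑ i, ∑ j, F i j * G i j else 0 := by
  have hF10 : F 1 0 = F 0 1 := hF.apply 0 1
  have hG10 : G 1 0 = G 0 1 := hG.apply 0 1
  have hF11 : F 1 1 = -F 0 0 := by
    rw [Matrix.trace_fin_two] at hFtr; linear_combination hFtr
  have hG11 : G 1 1 = -G 0 0 := by
    rw [Matrix.trace_fin_two] at hGtr; linear_combination hGtr
  fin_cases p <;> fin_cases q <;> simp [Fin.sum_univ_two, hF10, hG10, hF11, hG11] <;> ring

theorem Fintype.sum_fin_succ_pi {α M : Type*} [Fintype α] [AddCommMonoid M] {n : ℕ}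
    (f : (Fin (n + 1) → α) → M) :
    ∑ a, f a = ∑ x, ∑ a : Fin n → α, f (Fin.cons x a) := by
  rw [← (Fin.consEquiv fun _ => α).sum_comp, Fintype.sum_prod_type]
  rfl

section Symmetric

variable {α β : Type*} {n : ℕ} {f : (Fin (n + 2) → α) → β}

theorem apply_snoc_eq_apply_cons (hf : ∀ (σ : Equiv.Perm (Fin (n + 2))) v, f (v ∘ σ) = f v)
    (x : α) (v : Fin (n + 1) → α) :
    f (Fin.snoc v x) = f (Fin.cons x v) := by
  rw [Fin.snoc_eq_cons_rotate]
  exact hf (finRotate _) _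

theorem apply_cons_cons_comm (hf : ∀ (σ : Equiv.Perm (Fin (n + 2))) v, f (v ∘ σ) = f v)
    (x y : α) (v : Fin n → α) :
    f (Fin.cons x (Fin.cons y v)) = f (Fin.cons y (Fin.cons x v)) := by
  rw [← hf (Equiv.swap 0 1)]
  congr 1
  funext i
  refine Fin.cases ?_ (Fin.cases ?_ fun k => ?_) i <;>
    simp [Equiv.swap_apply_of_ne_of_ne (Fin.succ_ne_zero _) (Fin.succ_succ_ne_one _)]

end Symmetric

theorem OrthonormalBasis.sum_mul_add_mul_eq_mul_inner {ι κ V : Type*} [Fintype ι] [Fintype κ]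
    [NormedAddCommGroup V] [InnerProductSpace ℝ V] (e : OrthonormalBasis ι ℝ V)
    (f g : κ → V →ₗ[ℝ] ℝ) (c : ℝ)
    (h : ∀ p q, ∑ a, (f a (e p) * g a (e q) + f a (e q) * g a (e p)) = c * inner ℝ (e p) (e q))
    (v w : V) : ∑ a, (f a v * g a w + f a w * g a v) = c * inner ℝ v w := by
  let Φ : V →ₗ[ℝ] V →ₗ[ℝ] ℝ := ∑ a, ((LinearMap.mul ℝ ℝ).compl₁₂ (f a) (g a) +
    ((LinearMap.mul ℝ ℝ).compl₁₂ (f a) (g a)).flip)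
  have hΦ : Φ = c • innerₛₗ ℝ := e.toBasis.ext fun p => e.toBasis.ext fun q => by
    simpa [Φ] using h p q
  simpa [Φ] using LinearMap.congr_fun₂ hΦ v w

theorem sum_apply_snoc_mul_add_eq_mul_inner_basis {V : Type*} [NormedAddCommGroup V]
    [InnerProductSpace ℝ V] (e : OrthonormalBasis (Fin 2) ℝ V) {n : ℕ}
    {A B : MultilinearMap ℝ (fun _ : Fin (n + 2) => V) ℝ}
    (hAsymm : ∀ (σ : Equiv.Perm (Fin (n + 2))) (v : Fin (n + 2) → V), A (v ∘ σ) = A v)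
    (hBsymm : ∀ (σ : Equiv.Perm (Fin (n + 2))) (v : Fin (n + 2) → V), B (v ∘ σ) = B v)
    (hAtf : ∀ v : Fin n → V, ∑ i : Fin 2, A (Fin.cons (e i) (Fin.cons (e i) v)) = 0)
    (hBtf : ∀ v : Fin n → V, ∑ i : Fin 2, B (Fin.cons (e i) (Fin.cons (e i) v)) = 0)
    (p q : Fin 2) :
    ∑ a : Fin (n + 1) → Fin 2,
      (A (Fin.snoc (fun i => e (a i)) (e p)) * B (Fin.snoc (fun i => e (a i)) (e q))
        + A (Fin.snoc (fun i => e (a i)) (e q)) * B (Fin.snoc (fun i => e (a i)) (e p)))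
      = (∑ a : Fin (n + 2) → Fin 2, A (fun i => e (a i)) * B (fun i => e (a i)))
          * inner ℝ (e p) (e q) := by
  let F (b : Fin n → Fin 2) : Matrix (Fin 2) (Fin 2) ℝ :=
    Matrix.of fun i j => A (Fin.cons (e i) (Fin.cons (e j) (e ∘ b)))
  let G (b : Fin n → Fin 2) : Matrix (Fin 2) (Fin 2) ℝ :=
    Matrix.of fun i j => B (Fin.cons (e i) (Fin.cons (e j) (e ∘ b)))
  have hF (b) : (F b).IsSymm := Matrix.IsSymm.ext fun _ _ => apply_cons_cons_comm hAsymm _ _ _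
  have hG (b) : (G b).IsSymm := Matrix.IsSymm.ext fun _ _ => apply_cons_cons_comm hBsymm _ _ _
  have hAB : ∑ a : Fin (n + 2) → Fin 2, A (fun i => e (a i)) * B (fun i => e (a i))
      = ∑ b, ∑ i, ∑ j, F b i j * G b i j := by
    simp only [Fintype.sum_fin_succ_pi (n := n + 1), Fintype.sum_fin_succ_pi (n := n),
      ← Function.comp_def e, Fin.comp_cons, F, G, Matrix.of_apply]
    exact (Finset.sum_congr rfl fun _ _ => Finset.sum_comm).trans Finset.sum_comm
  calc _ = ∑ b, ∑ j, (F b p j * G b q j + F b q j * G b p j) := by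
        rw [Fintype.sum_fin_succ_pi, Finset.sum_comm]
        simp only [← Function.comp_def e, Fin.comp_cons, apply_snoc_eq_apply_cons hAsymm,
          apply_snoc_eq_apply_cons hBsymm, F, G, Matrix.of_apply]
    _ = ∑ b, if p = q then ∑ i, ∑ j, F b i j * G b i j else 0 := by
        simp only [Matrix.sum_mul_add_mul_eq_ite_of_isSymm_of_trace_eq_zero (hF _) (hG _)
          (hAtf _) (hBtf _)]
    _ = _ := by
        rw [hAB, e.inner_eq_ite]
        split_ifs <;> simp

/-- Let `V` be a 2-dimensional real inner product space with orthonormal basis `e`,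
and let `A`, `B` be trace-free symmetric `k`-linear forms on `V` (here `k = n + 2 ≥ 2`).
Then for all `v w : V`,
`∑_{a ∈ {1,2}^{k-1}} [A(e_{a₁},…,e_{a_{k-1}},v)·B(e_{a₁},…,e_{a_{k-1}},w)
  + A(e_{a₁},…,e_{a_{k-1}},w)·B(e_{a₁},…,e_{a_{k-1}},v)] = ⟨A,B⟩·⟨v,w⟩`. -/
theorem stmt1 {V : Type*} [NormedAddCommGroup V] [InnerProductSpace ℝ V]
    (e : OrthonormalBasis (Fin 2) ℝ V) (n : ℕ)
    (A B : MultilinearMap ℝ (fun _ : Fin (n + 2) => V) ℝ)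
    (hAsymm : ∀ (σ : Equiv.Perm (Fin (n + 2))) (v : Fin (n + 2) → V), A (v ∘ σ) = A v)
    (hBsymm : ∀ (σ : Equiv.Perm (Fin (n + 2))) (v : Fin (n + 2) → V), B (v ∘ σ) = B v)
    (hAtf : ∀ v : Fin n → V, ∑ i : Fin 2, A (Fin.cons (e i) (Fin.cons (e i) v)) = 0)
    (hBtf : ∀ v : Fin n → V, ∑ i : Fin 2, B (Fin.cons (e i) (Fin.cons (e i) v)) = 0)
    (v w : V) :
    ∑ a : Fin (n + 1) → Fin 2,
      (A (Fin.snoc (fun i => e (a i)) v) * B (Fin.snoc (fun i => e (a i)) w)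
        + A (Fin.snoc (fun i => e (a i)) w) * B (Fin.snoc (fun i => e (a i)) v))
      = (∑ a : Fin (n + 2) → Fin 2, A (fun i => e (a i)) * B (fun i => e (a i)))
          * (inner ℝ v w : ℝ) :=
  e.sum_mul_add_mul_eq_mul_inner (fun a : Fin (n + 1) → Fin 2 => A.curryRight fun i => e (a i))
    (fun a => B.curryRight fun i => e (a i)) _
    (sum_apply_snoc_mul_add_eq_mul_inner_basis e hAsymm hBsymm hAtf hBtf) v w
end

section
/- Let k ≥ 2 be an integer and let B be a symmetric k-linear form on V. Then the following are equivalent: (1) B is trace-free; (2) the k-linear form J•B defined by (J•B)(v₁,v₂,…,v_k) = B(Jv₁, v₂,…,v_k) is symmetric; (3) B(Jv₁, Jv₂, v₃,…,v_k) = −B(v₁, v₂, v₃,…,v_k) for all v₁,…,v_k ∈ V. -/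
/-!
Fixing all arguments of `B` but the first two gives a symmetric bilinear form `β` on `V`.
In the orthonormal basis `J e₀ = ε e₁` and `J e₁ = -ε e₀` with `ε² = 1`, which yields
the identity `β (J x) (J y) + β x y = (β e₀ e₀ + β e₁ e₁) ⟪x, y⟫`; hence (1) ⇔ (3).
As `J² = -1`, (3) is equivalent to `β (J x) y = β x (J y)`, i.e. to `J` in slot `0` or in
slot `1` of `B` giving the same value. By symmetry of `B` this is the same as `J` giving the
same value in every slot, which is (2).
-/

open Function

section SymmetricFunction

variable {ι M N : Type*} [DecidableEq ι] {F : (ι → M) → N}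

theorem update_comp_perm_of_symmetric (hF : ∀ (σ : Equiv.Perm ι) v, F (v ∘ σ) = F v)
    (f : M → M) (σ : Equiv.Perm ι) (v : ι → M) (i : ι) :
    F (update (v ∘ σ) i (f ((v ∘ σ) i))) = F (update v (σ i) (f (v (σ i)))) := by
  rw [← hF σ (update v _ _), update_comp_equiv, σ.symm_apply_apply, comp_apply]

theorem forall_update_comp_perm_iff_of_symmetric
    (hF : ∀ (σ : Equiv.Perm ι) v, F (v ∘ σ) = F v) (f : M → M) {i₀ i₁ : ι}
    (h : i₀ ≠ i₁) :
    (∀ (σ : Equiv.Perm ι) v,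
        F (update (v ∘ σ) i₀ (f ((v ∘ σ) i₀))) = F (update v i₀ (f (v i₀)))) ↔
      ∀ v, F (update v i₁ (f (v i₁))) = F (update v i₀ (f (v i₀))) := by
  simp only [update_comp_perm_of_symmetric hF]
  refine ⟨fun h' v => by simpa using h' (Equiv.swap i₀ i₁) v, fun h' σ v => ?_⟩
  obtain hσ | hσ := eq_or_ne (σ i₀) i₀
  · rw [hσ]
  -- `swap i₁ (σ i₀)` fixes `i₀`, so it moves `f` from slot `σ i₀` to slot `i₀`
  set τ := Equiv.swap i₁ (σ i₀)
  have hτ₀ : τ i₀ = i₀ := Equiv.swap_apply_of_ne_of_ne h hσ.symm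
  calc F (update v (σ i₀) (f (v (σ i₀))))
      = F (update (v ∘ τ) i₁ (f ((v ∘ τ) i₁))) := by
        rw [update_comp_perm_of_symmetric hF, Equiv.swap_apply_left]
    _ = F (update (v ∘ τ) i₀ (f ((v ∘ τ) i₀))) := h' _
    _ = F (update v i₀ (f (v i₀))) := by rw [update_comp_perm_of_symmetric hF, hτ₀]

end SymmetricFunction

theorem Fin.update_cons_cons_one {n : ℕ} {M : Type*} (x y z : M) (m : Fin n → M) :
    update (cons x (cons y m) : Fin (n + 2) → M) 1 z = cons x (cons z m) := by
  rw [← Fin.succ_zero_eq_one, ← Fin.cons_update, Fin.update_cons_zero]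

theorem Fin.forall_update_one_eq_update_zero_iff {n : ℕ} {M N : Type*}
    (F : (Fin (n + 2) → M) → N) (f : M → M) :
    (∀ v, F (update v 1 (f (v 1))) = F (update v 0 (f (v 0)))) ↔
      ∀ (m : Fin n → M) x y, F (cons x (cons (f y) m)) = F (cons (f x) (cons y m)) := by
  simp only [Fin.forall_fin_succ_pi, forall_comm (α := M) (β := Fin n → M), Fin.cons_one,
    Fin.cons_zero, Fin.update_cons_cons_one, Fin.update_cons_zero]

namespace MultilinearMap

variable {R M N : Type*} [CommSemiring R] [AddCommMonoid M] [Module R M] [AddCommMonoid N]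
  [Module R N] {n : ℕ}

def curryFirstTwo (B : MultilinearMap R (fun _ : Fin (n + 2) => M) N) (m : Fin n → M) :
    M →ₗ[R] M →ₗ[R] N :=
  LinearMap.mk₂ R (fun x y => B (Fin.cons x (Fin.cons y m)))
    (fun x x' _ => B.cons_add _ x x') (fun c x _ => B.cons_smul _ c x)
    (fun x y y' => (B.curryLeft x).cons_add m y y') (fun c x y => (B.curryLeft x).cons_smul m c y)

@[simp]
theorem curryFirstTwo_apply (B : MultilinearMap R (fun _ : Fin (n + 2) => M) N)
    (m : Fin n → M) (x y : M) : B.curryFirstTwo m x y = B (Fin.cons x (Fin.cons y m)) :=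
  rfl

theorem curryFirstTwo_comm {B : MultilinearMap R (fun _ : Fin (n + 2) => M) N}
    (hB : ∀ (σ : Equiv.Perm (Fin (n + 2))) v, B (v ∘ σ) = B v) (m : Fin n → M) (x y : M) :
    B.curryFirstTwo m x y = B.curryFirstTwo m y x := by
  have hswap : (Fin.cons x (Fin.cons y m) : Fin (n + 2) → M) ∘ Equiv.swap 0 1 =
      Fin.cons y (Fin.cons x m) := by
    funext i
    refine Fin.cases ?_ (Fin.cases ?_ fun k => ?_) i
    · simp
    · simp
    · rw [comp_apply, Equiv.swap_apply_of_ne_of_ne (Fin.succ_ne_zero _) (Fin.succ_succ_ne_one k)]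
      rfl
  simp only [curryFirstTwo_apply, ← hswap, hB]

end MultilinearMap

theorem LinearMap.forall_apply_map_comm_iff {R M N : Type*} [CommSemiring R] [AddCommGroup M]
    [Module R M] [AddCommGroup N] [Module R N] (β : M →ₗ[R] M →ₗ[R] N) {J : M →ₗ[R] M}
    (hJ : ∀ x, J (J x) = -x) :
    (∀ x y, β x (J y) = β (J x) y) ↔ ∀ x y, β (J x) (J y) = -β x y := by
  refine ⟨fun h x y => by rw [← h, hJ, map_neg], fun h x y => ?_⟩
  have hy : J (J (-y)) = y := by rw [hJ, neg_neg]
  conv_rhs => rw [← hy, h]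
  rw [map_neg, map_neg, neg_neg]

section InnerProductSpace

variable {V : Type*} [NormedAddCommGroup V] [InnerProductSpace ℝ V]
  (e : OrthonormalBasis (Fin 2) ℝ V) {J : V →ₗ[ℝ] V}

theorem inner_map_self_eq_zero_of_isometry (hJ2 : ∀ x, J (J x) = -x)
    (hJinner : ∀ x y, inner ℝ (J x) (J y) = inner ℝ x y) (x : V) : inner ℝ (J x) x = 0 := by
  have h := hJinner (J x) x
  rw [hJ2, inner_neg_left, real_inner_comm] at h
  linarith

theorem OrthonormalBasis.exists_map_eq_smul_of_isometry (hJ2 : ∀ x, J (J x) = -x)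
    (hJinner : ∀ x y, inner ℝ (J x) (J y) = inner ℝ x y) :
    ∃ ε : ℝ, J (e 0) = ε • e 1 ∧ J (e 1) = -ε • e 0 ∧ ε * ε = 1 := by
  have he := orthonormal_iff_ite.mp e.orthonormal
  set ε := inner ℝ (e 1) (J (e 0))
  have h0 : J (e 0) = ε • e 1 := by
    rw [← e.sum_repr' (J (e 0)), Fin.sum_univ_two, real_inner_comm,
      inner_map_self_eq_zero_of_isometry hJ2 hJinner, zero_smul, zero_add]
  have hε : ε * ε = 1 := by
    have := hJinner (e 0) (e 0)
    rwa [h0, real_inner_smul_left, real_inner_smul_right, he, he, if_pos rfl, if_pos rfl,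
      mul_one] at this
  refine ⟨ε, h0, ?_, hε⟩
  calc J (e 1) = (ε * ε) • J (e 1) := by rw [hε, one_smul]
    _ = -ε • e 0 := by rw [mul_smul, ← map_smul, ← h0, hJ2, smul_neg, neg_smul]

theorem map_map_add_eq_trace_mul_inner (hJ2 : ∀ x, J (J x) = -x)
    (hJinner : ∀ x y, inner ℝ (J x) (J y) = inner ℝ x y)
    {β : V →ₗ[ℝ] V →ₗ[ℝ] ℝ}
    (hβ : ∀ x y, β x y = β y x) (x y : V) :
    β (J x) (J y) + β x y = (∑ i, β (e i) (e i)) * inner ℝ x y := by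
  obtain ⟨ε, h0, h1, hε⟩ := e.exists_map_eq_smul_of_isometry hJ2 hJinner
  suffices β.compl₁₂ J J + β = (∑ i, β (e i) (e i)) • innerₗ V by
    simpa using LinearMap.congr_fun₂ this x y
  refine LinearMap.ext_basis e.toBasis e.toBasis fun i j => ?_
  fin_cases i <;> fin_cases j <;>
    simp only [Fin.zero_eta, Fin.mk_one, Fin.isValue, OrthonormalBasis.coe_toBasis,
      LinearMap.add_apply, LinearMap.compl₁₂_apply, h0, h1, map_smul, map_neg, neg_smul,
      LinearMap.smul_apply, LinearMap.neg_apply, smul_eq_mul, mul_neg, neg_neg, Fin.sum_univ_two,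
      innerₗ_apply_apply, orthonormal_iff_ite.mp e.orthonormal, zero_ne_one, one_ne_zero,
      reduceIte, mul_zero, mul_one]
  · linear_combination β (e 1) (e 1) * hε
  · linear_combination -β (e 1) (e 0) * hε + hβ (e 0) (e 1)
  · linear_combination -β (e 0) (e 1) * hε + hβ (e 1) (e 0)
  · linear_combination β (e 0) (e 0) * hε

theorem trace_eq_zero_iff_map_map_eq_neg (hJ2 : ∀ x, J (J x) = -x)
    (hJinner : ∀ x y, inner ℝ (J x) (J y) = inner ℝ x y)
    {β : V →ₗ[ℝ] V →ₗ[ℝ] ℝ}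
    (hβ : ∀ x y, β x y = β y x) :
    ∑ i, β (e i) (e i) = 0 ↔ ∀ x y, β (J x) (J y) = -β x y := by
  refine ⟨fun h x y => ?_, fun h => ?_⟩
  · linear_combination map_map_add_eq_trace_mul_inner e hJ2 hJinner hβ x y + inner ℝ x y * h
  · have := map_map_add_eq_trace_mul_inner e hJ2 hJinner hβ (e 0) (e 0)
    rw [h, neg_add_cancel, orthonormal_iff_ite.mp e.orthonormal, if_pos rfl] at this
    linarith

end InnerProductSpace

/-- Let `V` be a 2-dimensional real inner product space with orthonormal basis `e`,
`J : V → V` linear with `J∘J = -id` preserving the inner product, and let `B` be a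
symmetric `k`-linear form on `V` (here `k = n + 2 ≥ 2`). Then the following are
equivalent: (1) `B` is trace-free; (2) the form `J•B : (v₁,…,v_k) ↦ B(Jv₁,v₂,…,v_k)`
is symmetric; (3) `B(Jv₁, Jv₂, v₃,…,v_k) = -B(v₁,…,v_k)` for all `v₁,…,v_k`. -/
theorem stmt3 {V : Type*} [NormedAddCommGroup V] [InnerProductSpace ℝ V]
    (e : OrthonormalBasis (Fin 2) ℝ V) (J : V →ₗ[ℝ] V)
    (hJ2 : ∀ x : V, J (J x) = -x)
    (hJinner : ∀ x y : V, (inner ℝ (J x) (J y) : ℝ) = inner ℝ x y)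
    (n : ℕ)
    (B : MultilinearMap ℝ (fun _ : Fin (n + 2) => V) ℝ)
    (hBsymm : ∀ (σ : Equiv.Perm (Fin (n + 2))) (v : Fin (n + 2) → V), B (v ∘ σ) = B v) :
    ((∀ v : Fin n → V, ∑ i : Fin 2, B (Fin.cons (e i) (Fin.cons (e i) v)) = 0)
      ↔ (∀ (σ : Equiv.Perm (Fin (n + 2))) (v : Fin (n + 2) → V),
          B (Function.update (v ∘ σ) 0 (J ((v ∘ σ) 0)))
            = B (Function.update v 0 (J (v 0)))))
    ∧ ((∀ v : Fin n → V, ∑ i : Fin 2, B (Fin.cons (e i) (Fin.cons (e i) v)) = 0)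
      ↔ (∀ (x y : V) (v : Fin n → V),
          B (Fin.cons (J x) (Fin.cons (J y) v)) = - B (Fin.cons x (Fin.cons y v)))) := by
  have h13 := forall_congr' fun m =>
    trace_eq_zero_iff_map_map_eq_neg e hJ2 hJinner (B.curryFirstTwo_comm hBsymm m)
  have h23 := (forall_update_comp_perm_iff_of_symmetric hBsymm J zero_ne_one).trans <|
    (Fin.forall_update_one_eq_update_zero_iff B J).trans <|
      forall_congr' fun m => (B.curryFirstTwo m).forall_apply_map_comm_iff hJ2
  simp only [MultilinearMap.curryFirstTwo_apply] at h13 h23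
  exact ⟨h13.trans h23.symm,
    h13.trans ((forall_congr' fun _ => forall_comm).trans forall_comm).symm⟩
end

section
/- Let k ≥ 2 be an integer. If B is a trace-free symmetric k-linear form on V, then the k-linear form J•B defined by (J•B)(v₁,…,v_k) = B(Jv₁, v₂,…,v_k) is again a trace-free symmetric k-linear form and satisfies J•(J•B) = −B; thus B ↦ J•B is a complex structure on the real vector space of trace-free symmetric k-linear forms on V. Moreover this vector space has real dimension 2. -/
open scoped BigOperators

/-- The real vector space of trace-free symmetric `(n+2)`-linear forms on a real inner
product space `V` with orthonormal basis `e : Fin 2 → V`. -/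
noncomputable def traceFreeSymm {V : Type*} [NormedAddCommGroup V] [InnerProductSpace ℝ V]
    (e : OrthonormalBasis (Fin 2) ℝ V) (n : ℕ) :
    Submodule ℝ (MultilinearMap ℝ (fun _ : Fin (n + 2) => V) ℝ) where
  carrier := {B | (∀ (σ : Equiv.Perm (Fin (n + 2))) (v : Fin (n + 2) → V), B (v ∘ σ) = B v)
    ∧ ∀ v : Fin n → V, ∑ i : Fin 2, B (Fin.cons (e i) (Fin.cons (e i) v)) = 0}
  add_mem' := by
    rintro B C ⟨hB1, hB2⟩ ⟨hC1, hC2⟩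
    refine ⟨fun σ v => ?_, fun v => ?_⟩
    · simp only [MultilinearMap.add_apply, hB1 σ v, hC1 σ v]
    · simp only [MultilinearMap.add_apply, Finset.sum_add_distrib, hB2 v, hC2 v, add_zero]
  zero_mem' := by
    refine ⟨fun σ v => rfl, fun v => ?_⟩
    simp
  smul_mem' := by
    rintro c B ⟨hB1, hB2⟩
    refine ⟨fun σ v => ?_, fun v => ?_⟩
    · simp only [MultilinearMap.smul_apply, hB1 σ v]
    · simp only [MultilinearMap.smul_apply, ← Finset.smul_sum, hB2 v, smul_zero]

/-!
Identify `V` with `ℂ` by `e₀ ↦ 1`, `e₁ ↦ i`. The product `P(v) = ∏ vᵢ` is a complex-valued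
symmetric form, trace-free because `1² + i² = 0`, so `φ ∘ P` is a trace-free symmetric real form
for every real-linear `φ : ℂ → ℝ`. Conversely, a trace-free symmetric form vanishing at
`(e₀, …, e₀)` and `(e₁, e₀, …, e₀)` is zero (induction on the degree, fixing the first argument
to `e₀` or `e₁`), so `φ ↦ φ ∘ P` is an isomorphism from `Hom_ℝ(ℂ, ℝ)` onto the space, which
therefore has dimension 2. An orthogonal `J` with `J² = -1` is skew, hence acts on `ℂ` as
multiplication by `c = ⟨J e₀, e₁⟩ i`, and `J • (φ ∘ P) = (φ ∘ (c * ·)) ∘ P` stays in the space.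
-/

open Complex

lemma Fin.cons_const {α : Type*} {k : ℕ} (x : α) :
    (Fin.cons x fun _ => x : Fin (k + 1) → α) = fun _ => x := by
  funext i
  cases i using Fin.cases <;> rfl

lemma MultilinearMap.compLinearMap_update_id_apply {R M N ι : Type*} [CommSemiring R]
    [AddCommMonoid M] [Module R M] [AddCommMonoid N] [Module R N] [DecidableEq ι]
    (f : MultilinearMap R (fun _ : ι => M) N) (i : ι) (L : M →ₗ[R] M) (v : ι → M) :
    f.compLinearMap (Function.update (fun _ => LinearMap.id) i L) v
      = f (Function.update v i (L (v i))) := by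
  rw [MultilinearMap.compLinearMap_apply]
  congr 1
  funext j
  rcases eq_or_ne j i with rfl | h <;> simp [*]

lemma LinearMap.inner_map_eq_neg_inner_map_of_sq_eq_neg {V : Type*} [NormedAddCommGroup V]
    [InnerProductSpace ℝ V] {J : V →ₗ[ℝ] V} (hJ2 : ∀ x : V, J (J x) = -x)
    (hJinner : ∀ x y : V, (inner ℝ (J x) (J y) : ℝ) = inner ℝ x y) (x y : V) :
    (inner ℝ (J x) y : ℝ) = -inner ℝ x (J y) := by
  rw [← hJinner, hJ2, inner_neg_left]

namespace TraceFreeSymm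

variable {V : Type*} [NormedAddCommGroup V] [InnerProductSpace ℝ V]
  (e : OrthonormalBasis (Fin 2) ℝ V)

noncomputable def toComplex : V ≃ₗ[ℝ] ℂ := e.toBasis.equiv basisOneI (Equiv.refl _)

@[simp]
lemma toComplex_e_zero : toComplex e (e 0) = 1 := by
  simpa [toComplex] using e.toBasis.equiv_apply 0 basisOneI (Equiv.refl _)

@[simp]
lemma toComplex_e_one : toComplex e (e 1) = I := by
  simpa [toComplex] using e.toBasis.equiv_apply 1 basisOneI (Equiv.refl _)

lemma toComplex_apply (x : V) :
    toComplex e x = (inner ℝ (e 0) x : ℝ) + (inner ℝ (e 1) x : ℝ) * I := by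
  conv_lhs => rw [← e.sum_repr' x]
  simp [Fin.sum_univ_two, Complex.real_smul]

noncomputable def prodForm (k : ℕ) : MultilinearMap ℝ (fun _ : Fin k => V) ℂ :=
  (MultilinearMap.mkPiAlgebra ℝ (Fin k) ℂ).compLinearMap fun _ => (toComplex e : V →ₗ[ℝ] ℂ)

lemma prodForm_apply {k : ℕ} (v : Fin k → V) : prodForm e k v = ∏ i, toComplex e (v i) := by
  simp [prodForm]

lemma prodForm_cons {k : ℕ} (x : V) (v : Fin k → V) :
    prodForm e (k + 1) (Fin.cons x v) = toComplex e x * prodForm e k v := by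
  simp only [prodForm_apply, Fin.prod_univ_succ, Fin.cons_zero, Fin.cons_succ]

lemma prodForm_comp_perm {k : ℕ} (σ : Equiv.Perm (Fin k)) (v : Fin k → V) :
    prodForm e k (v ∘ σ) = prodForm e k v := by
  simp only [prodForm_apply]
  exact Equiv.prod_comp σ fun i => toComplex e (v i)

lemma prodForm_trace {k : ℕ} (v : Fin k → V) :
    ∑ i : Fin 2, prodForm e (k + 2) (Fin.cons (e i) (Fin.cons (e i) v)) = 0 := by
  simp [prodForm_cons, ← mul_assoc]

lemma prodForm_const (k : ℕ) : prodForm e k (fun _ => e 0) = 1 := by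
  simp [prodForm_apply]

lemma prodForm_cons_const (k : ℕ) : prodForm e (k + 1) (Fin.cons (e 1) fun _ => e 0) = I := by
  rw [prodForm_cons, prodForm_const, toComplex_e_one, mul_one]

noncomputable def realForm (k : ℕ) :
    (ℂ →ₗ[ℝ] ℝ) →ₗ[ℝ] MultilinearMap ℝ (fun _ : Fin k => V) ℝ where
  toFun φ := φ.compMultilinearMap (prodForm e k)
  map_add' _ _ := rfl
  map_smul' _ _ := rfl

lemma realForm_apply {k : ℕ} (φ : ℂ →ₗ[ℝ] ℝ) (v : Fin k → V) :
    realForm e k φ v = φ (prodForm e k v) := rfl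

lemma realForm_mem_traceFreeSymm (n : ℕ) (φ : ℂ →ₗ[ℝ] ℝ) :
    realForm e (n + 2) φ ∈ traceFreeSymm e n := by
  refine ⟨fun σ v => ?_, fun v => ?_⟩
  · rw [realForm_apply, realForm_apply, prodForm_comp_perm]
  · simp only [realForm_apply, ← map_sum, prodForm_trace, map_zero]

lemma curryLeft_mem_traceFreeSymm {n : ℕ} {B : MultilinearMap ℝ (fun _ : Fin (n + 3) => V) ℝ}
    (hB : B ∈ traceFreeSymm e (n + 1)) (x : V) : B.curryLeft x ∈ traceFreeSymm e n := by
  obtain ⟨hsymm, htrace⟩ := hB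
  refine ⟨fun σ v => ?_, fun v => ?_⟩
  · have hcons : (Fin.cons x (v ∘ σ) : Fin (n + 3) → V)
        = Fin.cons x v ∘ Equiv.Perm.decomposeFin.symm (0, σ) := by
      funext i
      cases i using Fin.cases <;> simp [Equiv.Perm.decomposeFin_symm_apply_succ]
    rw [MultilinearMap.curryLeft_apply, MultilinearMap.curryLeft_apply, hcons, hsymm]
  · have hmove : ∀ y : V, B (Fin.cons x (Fin.cons y (Fin.cons y v)))
        = B (Fin.cons y (Fin.cons y (Fin.cons x v))) := fun y => by
      rw [← hsymm (Equiv.swap 0 2)]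
      congr 1
      funext i
      rcases i with ⟨_ | _ | _ | i, hi⟩ <;> rfl
    simpa only [MultilinearMap.curryLeft_apply, hmove] using htrace (Fin.cons x v)

lemma eq_zero_of_forall_curryLeft {k : ℕ} {B : MultilinearMap ℝ (fun _ : Fin (k + 1) => V) ℝ}
    (h : ∀ i, B.curryLeft (e i) = 0) : B = 0 := by
  have hcurry : B.curryLeft = 0 := e.toBasis.ext fun i => by simpa using h i
  ext v
  rw [← Fin.cons_self_tail v, ← MultilinearMap.curryLeft_apply, hcurry]
  rfl

lemma apply_cons_cons_const_eq_zero {n : ℕ} {B : MultilinearMap ℝ (fun _ : Fin (n + 2) => V) ℝ}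
    (hB : B ∈ traceFreeSymm e n) (h₀ : B (fun _ => e 0) = 0)
    (h₁ : B (Fin.cons (e 1) fun _ => e 0) = 0) (i j : Fin 2) :
    B (Fin.cons (e i) (Fin.cons (e j) fun _ => e 0)) = 0 := by
  obtain ⟨hsymm, htrace⟩ := hB
  have h₀₀ : B (Fin.cons (e 0) (Fin.cons (e 0) fun _ => e 0)) = 0 := by
    rwa [Fin.cons_const, Fin.cons_const]
  have h₁₀ : B (Fin.cons (e 1) (Fin.cons (e 0) fun _ => e 0)) = 0 := by
    rwa [Fin.cons_const]
  have h₀₁ : B (Fin.cons (e 0) (Fin.cons (e 1) fun _ => e 0)) = 0 := by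
    rw [← hsymm (Equiv.swap 0 1), ← h₁₀]
    congr 1
    funext i
    rcases i with ⟨_ | _ | i, hi⟩ <;> rfl
  have h₁₁ : B (Fin.cons (e 1) (Fin.cons (e 1) fun _ => e 0)) = 0 := by
    have := htrace fun _ => e 0
    rwa [Fin.sum_univ_two, h₀₀, zero_add] at this
  fin_cases i <;> fin_cases j <;> assumption

lemma eq_zero_of_mem_traceFreeSymm {n : ℕ} {B : MultilinearMap ℝ (fun _ : Fin (n + 2) => V) ℝ}
    (hB : B ∈ traceFreeSymm e n) (h₀ : B (fun _ => e 0) = 0)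
    (h₁ : B (Fin.cons (e 1) fun _ => e 0) = 0) : B = 0 := by
  induction n with
  | zero =>
    refine eq_zero_of_forall_curryLeft e fun i => eq_zero_of_forall_curryLeft e fun j => ?_
    ext w
    rw [Subsingleton.elim w fun _ => e 0]
    exact apply_cons_cons_const_eq_zero e hB h₀ h₁ i j
  | succ n ih =>
    refine eq_zero_of_forall_curryLeft e fun i => ih (curryLeft_mem_traceFreeSymm e hB _) ?_ ?_
    · have := apply_cons_cons_const_eq_zero e hB h₀ h₁ i 0
      rwa [Fin.cons_const] at this
    · exact apply_cons_cons_const_eq_zero e hB h₀ h₁ i 1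

lemma realForm_injective (n : ℕ) : Function.Injective (realForm e (n + 2)) := by
  refine (injective_iff_map_eq_zero _).mpr fun φ hφ => basisOneI.ext fun i => ?_
  fin_cases i
  · simpa [realForm_apply, prodForm_const] using congr($hφ fun _ => e 0)
  · simpa [realForm_apply, prodForm_cons_const] using congr($hφ (Fin.cons (e 1) fun _ => e 0))

lemma range_realForm (n : ℕ) : LinearMap.range (realForm e (n + 2)) = traceFreeSymm e n := by
  refine le_antisymm (LinearMap.range_le_iff_comap.mpr ?_) fun B hB => ?_
  · exact eq_top_iff.mpr fun φ _ => realForm_mem_traceFreeSymm e n φ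
  set φ : ℂ →ₗ[ℝ] ℝ := B (fun _ => e 0) • reLm + B (Fin.cons (e 1) fun _ => e 0) • imLm
  refine ⟨φ, (sub_eq_zero.mp (eq_zero_of_mem_traceFreeSymm e
    (sub_mem (realForm_mem_traceFreeSymm e n φ) hB) ?_ ?_))⟩ <;>
  simp [φ, realForm_apply, prodForm_const, prodForm_cons_const]

lemma finrank_traceFreeSymm (n : ℕ) : Module.finrank ℝ (traceFreeSymm e n) = 2 := by
  rw [← range_realForm, LinearMap.finrank_range_of_inj (realForm_injective e n),
    Module.finrank_linearMap, Complex.finrank_real_complex, Module.finrank_self, mul_one]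

lemma toComplex_map_of_skew {J : V →ₗ[ℝ] V}
    (hskew : ∀ x y : V, (inner ℝ (J x) y : ℝ) = -inner ℝ x (J y)) (x : V) :
    toComplex e (J x) = ((inner ℝ (J (e 0)) (e 1) : ℝ) * I) * toComplex e x := by
  have hself : ∀ y : V, (inner ℝ y (J y) : ℝ) = 0 := fun y => by
    linarith [hskew y y, real_inner_comm y (J y)]
  suffices (toComplex e : V →ₗ[ℝ] ℂ) ∘ₗ J
      = LinearMap.mulLeft ℝ ((inner ℝ (J (e 0)) (e 1) : ℝ) * I) ∘ₗ (toComplex e : V →ₗ[ℝ] ℂ) from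
    congr($this x)
  refine e.toBasis.ext fun i => ?_
  fin_cases i
  · simp [toComplex_apply, hself, real_inner_comm (e 1)]
  · have h : (inner ℝ (e 0) (J (e 1)) : ℝ) = -inner ℝ (e 1) (J (e 0)) := by
      linarith [hskew (e 0) (e 1), real_inner_comm (J (e 0)) (e 1)]
    simp [toComplex_apply, hself, h, real_inner_comm (e 1)]

lemma prodForm_update_zero {J : V →ₗ[ℝ] V} {c : ℂ}
    (hJ : ∀ x, toComplex e (J x) = c * toComplex e x) {k : ℕ} (v : Fin (k + 1) → V) :
    prodForm e (k + 1) (Function.update v 0 (J (v 0))) = c * prodForm e (k + 1) v := by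
  cases v using Fin.consCases with
  | cons x w =>
    rw [Fin.cons_zero, Fin.update_cons_zero, prodForm_cons, prodForm_cons, hJ, mul_assoc]

lemma realForm_compLinearMap_update_zero {J : V →ₗ[ℝ] V} {c : ℂ}
    (hJ : ∀ x, toComplex e (J x) = c * toComplex e x) (n : ℕ) (φ : ℂ →ₗ[ℝ] ℝ) :
    (realForm e (n + 2) φ).compLinearMap (Function.update (fun _ => LinearMap.id) 0 J)
      = realForm e (n + 2) (φ ∘ₗ LinearMap.mulLeft ℝ c) := by
  ext v
  rw [MultilinearMap.compLinearMap_update_id_apply, realForm_apply, realForm_apply,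
    prodForm_update_zero e hJ]
  rfl

lemma compLinearMap_update_zero_mem_traceFreeSymm {J : V →ₗ[ℝ] V}
    (hskew : ∀ x y : V, (inner ℝ (J x) y : ℝ) = -inner ℝ x (J y)) {n : ℕ}
    {B : MultilinearMap ℝ (fun _ : Fin (n + 2) => V) ℝ} (hB : B ∈ traceFreeSymm e n) :
    B.compLinearMap (Function.update (fun _ => LinearMap.id) 0 J) ∈ traceFreeSymm e n := by
  obtain ⟨φ, rfl⟩ := (range_realForm e n).ge hB
  rw [realForm_compLinearMap_update_zero e (toComplex_map_of_skew e hskew)]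
  exact realForm_mem_traceFreeSymm e n _

end TraceFreeSymm

open TraceFreeSymm

/-- If `B` is a trace-free symmetric `k`-linear form on the 2-dimensional real inner
product space `V` (here `k = n + 2 ≥ 2`), then `J•B : v ↦ B(Jv₁, v₂, …, v_k)` is again a
trace-free symmetric `k`-linear form and `J•(J•B) = -B`, so `B ↦ J•B` is a complex
structure on the space of trace-free symmetric `k`-linear forms; moreover that space has
real dimension 2. -/
theorem stmt4 {V : Type*} [NormedAddCommGroup V] [InnerProductSpace ℝ V]
    (e : OrthonormalBasis (Fin 2) ℝ V) (J : V →ₗ[ℝ] V)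
    (hJ2 : ∀ x : V, J (J x) = -x)
    (hJinner : ∀ x y : V, (inner ℝ (J x) (J y) : ℝ) = inner ℝ x y)
    (n : ℕ)
    (B : MultilinearMap ℝ (fun _ : Fin (n + 2) => V) ℝ)
    (hB : B ∈ traceFreeSymm e n) :
    (∃ JB : MultilinearMap ℝ (fun _ : Fin (n + 2) => V) ℝ,
      (∀ v : Fin (n + 2) → V, JB v = B (Function.update v 0 (J (v 0))))
      ∧ JB ∈ traceFreeSymm e n
      ∧ (∀ v : Fin (n + 2) → V, JB (Function.update v 0 (J (v 0))) = - B v))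
    ∧ Module.finrank ℝ (traceFreeSymm e n) = 2 := by
  refine ⟨⟨B.compLinearMap (Function.update (fun _ => LinearMap.id) 0 J),
    fun v => B.compLinearMap_update_id_apply 0 J v,
    compLinearMap_update_zero_mem_traceFreeSymm e
      (LinearMap.inner_map_eq_neg_inner_map_of_sq_eq_neg hJ2 hJinner) hB,
    fun v => ?_⟩, finrank_traceFreeSymm e n⟩
  rw [MultilinearMap.compLinearMap_update_id_apply, Function.update_idem, Function.update_self,
    hJ2, B.map_update_neg, Function.update_eq_self]
end

section
/- The function τ : ℝ → ℝ defined by τ(z) = z·(π/2 − arctan z) is infinitely differentiable, strictly increasing, and is a bijection from ℝ onto the interval (−∞, 1); in particular τ(z) → 1 as z → +∞ and τ(z) → −∞ as z → −∞. -/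
open Real Filter

lemma key_lt {t : ℝ} (ht : 0 < t) : t / (1 + t ^ 2) < arctan t := by
  have ha : 0 < arctan t := by simpa using arctan_strictMono ht
  have h1 : sin (arctan t) * cos (arctan t) = t / (1 + t ^ 2) := by
    rw [sin_arctan, cos_arctan, div_mul_div_comm, mul_one,
      Real.mul_self_sqrt (by positivity)]
  have h2 : sin (2 * arctan t) < 2 * arctan t := Real.sin_lt (by linarith)
  rw [Real.sin_two_mul] at h2
  nlinarith

lemma deriv_pos (z : ℝ) : 0 < (π / 2 - arctan z) - z * (1 / (1 + z ^ 2)) := by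
  rcases le_or_gt z 0 with hz | hz
  · have h1 : arctan z < π / 2 := arctan_lt_pi_div_two z
    have h2 : z * (1 / (1 + z ^ 2)) ≤ 0 := by
      apply mul_nonpos_of_nonpos_of_nonneg hz; positivity
    linarith
  · have h1 : arctan z⁻¹ = π / 2 - arctan z := arctan_inv_of_pos hz
    have h2 := key_lt (t := z⁻¹) (by positivity)
    rw [h1] at h2
    have h3 : z⁻¹ / (1 + z⁻¹ ^ 2) = z * (1 / (1 + z ^ 2)) := by
      field_simp
      ring
    linarith [h3 ▸ h2]

lemma hd (z : ℝ) : HasDerivAt (fun z : ℝ => z * (π / 2 - arctan z))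
    ((π / 2 - arctan z) - z * (1 / (1 + z ^ 2))) z := by
  have : HasDerivAt (fun y : ℝ => id y * (π / 2 - arctan y))
      (1 * (π / 2 - arctan z) + z * (0 - 1 / (1 + z ^ 2))) z :=
    (hasDerivAt_id z).mul ((hasDerivAt_const z (π / 2)).sub (hasDerivAt_arctan z))
  convert this using 1
  simp only [id_eq]
  ring

lemma sm : StrictMono (fun z : ℝ => z * (π / 2 - arctan z)) := by
  apply strictMono_of_deriv_pos
  intro z
  rw [(hd z).deriv]
  exact deriv_pos z

lemma tt : Tendsto (fun z : ℝ => z * (π / 2 - arctan z)) atTop (nhds 1) := by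
  have h0 : HasDerivAt arctan 1 0 := by
    simpa using hasDerivAt_arctan 0
  have hslope : Tendsto (fun t : ℝ => arctan t / t) (nhdsWithin 0 {(0:ℝ)}ᶜ) (nhds 1) := by
    have := hasDerivAt_iff_tendsto_slope.mp h0
    refine this.congr' ?_
    filter_upwards [self_mem_nhdsWithin] with t ht
    simp [slope_def_field, div_eq_mul_inv]
  have hinv : Tendsto (fun z : ℝ => z⁻¹) atTop (nhdsWithin 0 {(0:ℝ)}ᶜ) := by
    apply tendsto_nhdsWithin_of_tendsto_nhds_of_eventually_within _ tendsto_inv_atTop_zero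
    filter_upwards [eventually_gt_atTop 0] with z hz
    simp [ne_of_gt (inv_pos.mpr hz)]
  have := hslope.comp hinv
  refine this.congr' ?_
  filter_upwards [eventually_gt_atTop 0] with z hz
  rw [Function.comp_apply, arctan_inv_of_pos hz, div_eq_mul_inv, inv_inv, mul_comm]

lemma tb : Tendsto (fun z : ℝ => z * (π / 2 - arctan z)) atBot atBot := by
  apply tendsto_atBot_mono' _ _ (tendsto_id.atBot_mul_const (by positivity : (0:ℝ) < π / 2))
  filter_upwards [eventually_le_atBot 0] with z hz
  have h1 : π / 2 ≤ π / 2 - arctan z := by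
    have : arctan z ≤ 0 := by simpa using arctan_strictMono.monotone hz
    linarith
  calc z * (π / 2 - arctan z) ≤ z * (π / 2) := mul_le_mul_of_nonpos_left h1 hz
    _ = id z * (π / 2) := rfl

/-- The function `τ(z) = z·(π/2 − arctan z)` is infinitely differentiable, strictly
increasing, and a bijection from `ℝ` onto `(−∞, 1)`; in particular `τ(z) → 1` as
`z → +∞` and `τ(z) → −∞` as `z → −∞`. -/
theorem stmt5 :
    ContDiff ℝ (⊤ : ℕ∞) (fun z : ℝ => z * (π / 2 - arctan z))
    ∧ StrictMono (fun z : ℝ => z * (π / 2 - arctan z))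
    ∧ Set.range (fun z : ℝ => z * (π / 2 - arctan z)) = Set.Iio 1
    ∧ Tendsto (fun z : ℝ => z * (π / 2 - arctan z)) atTop (nhds 1)
    ∧ Tendsto (fun z : ℝ => z * (π / 2 - arctan z)) atBot atBot := by
  refine ⟨contDiff_id.mul (contDiff_const.sub contDiff_arctan), sm, ?_, tt, tb⟩
  have hc : Continuous (fun z : ℝ => z * (π / 2 - arctan z)) :=
    continuous_id.mul (continuous_const.sub continuous_arctan)
  apply Set.eq_of_subset_of_subset
  · rintro y ⟨z, rfl⟩
    have h1 : (fun z : ℝ => z * (π / 2 - arctan z)) z < 1 := by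
      have hle : ∀ w ≥ z + 1, (fun z : ℝ => z * (π / 2 - arctan z)) (z+1) ≤
          (fun z : ℝ => z * (π / 2 - arctan z)) w := fun w hw => sm.monotone hw
      have : (fun z : ℝ => z * (π / 2 - arctan z)) (z+1) ≤ 1 :=
        ge_of_tendsto tt (eventually_atTop.mpr ⟨z + 1, hle⟩)
      have := sm (lt_add_one z)
      linarith
    exact h1
  · intro y hy
    simp only [Set.mem_Iio] at hy
    obtain ⟨a, ha⟩ : ∃ a, (fun z : ℝ => z * (π / 2 - arctan z)) a < y := by
      have := tb.eventually (eventually_lt_atBot y)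
      exact this.exists
    obtain ⟨b, hb⟩ : ∃ b, y < (fun z : ℝ => z * (π / 2 - arctan z)) b := by
      have := tt.eventually (eventually_gt_nhds hy)
      exact this.exists
    have hab : a ≤ b := le_of_lt (sm.lt_iff_lt.mp (ha.trans hb))
    obtain ⟨c, _, hc'⟩ := intermediate_value_Icc hab (hc.continuousOn)
      ⟨le_of_lt ha, le_of_lt hb⟩
    exact ⟨c, hc'⟩
end

section
/- Let c > 0 and κ ∈ ℝ, and define u : ℝ → ℝ by u(s) = c^(−1)·( √(κ² + 4c)·cosh(√c·s) + κ ). Then u(s) > 0 for all s, u(s) → +∞ as s → ±∞, and u satisfies the differential equation (u′(s))² = c·u(s)² − 2κ·u(s) − 4 for all s ∈ ℝ. -/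
open Real Filter

/-!
With `a = √(κ² + 4c)` we have `a > |κ|`, so `u ≥ c⁻¹(a + κ) > 0`, and `u → ∞` because `cosh` does.
Since `u′ = c⁻¹ a √c sinh(√c s)`, the identity `cosh² − sinh² = 1` turns `(u′)²` into
`c⁻¹ a² (cosh² − 1)`, while `c u² − 2κu − 4 = c⁻¹ (a² cosh² − κ²) − 4`; the two agree
because `a² = κ² + 4c`.
-/

namespace Real

theorem exp_div_two_le_cosh (x : ℝ) : exp x / 2 ≤ cosh x := by
  rw [cosh_eq]
  linarith [exp_pos (-x)]

theorem tendsto_cosh_atTop : Tendsto cosh atTop atTop :=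
  tendsto_atTop_mono exp_div_two_le_cosh (tendsto_exp_atTop.atTop_div_const two_pos)

theorem tendsto_cosh_atBot : Tendsto cosh atBot atTop := by
  simpa [Function.comp_def] using tendsto_cosh_atTop.comp tendsto_neg_atBot_atTop

end Real

noncomputable def einsteinWeylProfile (c κ s : ℝ) : ℝ :=
  c⁻¹ * (√(κ ^ 2 + 4 * c) * cosh (√c * s) + κ)

section EinsteinWeylProfile

variable {c : ℝ} (κ : ℝ)

theorem abs_lt_sqrt_sq_add_four_mul (hc : 0 < c) : |κ| < √(κ ^ 2 + 4 * c) :=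
  (lt_sqrt (abs_nonneg κ)).2 (by rw [sq_abs]; linarith)

theorem einsteinWeylProfile_pos (hc : 0 < c) (s : ℝ) : 0 < einsteinWeylProfile c κ s := by
  have hκ : -√(κ ^ 2 + 4 * c) < κ :=
    (neg_abs_le κ).trans_lt' (neg_lt_neg (abs_lt_sqrt_sq_add_four_mul κ hc))
  have : √(κ ^ 2 + 4 * c) ≤ √(κ ^ 2 + 4 * c) * cosh (√c * s) :=
    le_mul_of_one_le_right (sqrt_nonneg _) (one_le_cosh _)
  unfold einsteinWeylProfile
  have : 0 < √(κ ^ 2 + 4 * c) * cosh (√c * s) + κ := by linarith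
  positivity

theorem Filter.Tendsto.einsteinWeylProfile (hc : 0 < c) {l : Filter ℝ}
    (h : Tendsto (fun s => cosh (√c * s)) l atTop) :
    Tendsto (einsteinWeylProfile c κ) l atTop := by
  have ha : 0 < √(κ ^ 2 + 4 * c) := (abs_nonneg κ).trans_lt (abs_lt_sqrt_sq_add_four_mul κ hc)
  exact (tendsto_atTop_add_const_right l κ (h.const_mul_atTop ha)).const_mul_atTop (inv_pos.2 hc)

theorem tendsto_einsteinWeylProfile_atTop (hc : 0 < c) :
    Tendsto (einsteinWeylProfile c κ) atTop atTop :=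
  (tendsto_cosh_atTop.comp (tendsto_id.const_mul_atTop (sqrt_pos.2 hc))).einsteinWeylProfile κ hc

theorem tendsto_einsteinWeylProfile_atBot (hc : 0 < c) :
    Tendsto (einsteinWeylProfile c κ) atBot atTop :=
  (tendsto_cosh_atBot.comp (tendsto_id.const_mul_atBot (sqrt_pos.2 hc))).einsteinWeylProfile κ hc

theorem hasDerivAt_einsteinWeylProfile (s : ℝ) :
    HasDerivAt (einsteinWeylProfile c κ) (c⁻¹ * (√(κ ^ 2 + 4 * c) * (sinh (√c * s) * √c))) s :=
  ((((hasDerivAt_id' s).const_mul √c).cosh.const_mul _).add_const κ).const_mul c⁻¹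
    |>.congr_deriv (by rw [mul_one])

theorem deriv_einsteinWeylProfile_sq (hc : 0 < c) (s : ℝ) :
    deriv (einsteinWeylProfile c κ) s ^ 2 =
      c * einsteinWeylProfile c κ s ^ 2 - 2 * κ * einsteinWeylProfile c κ s - 4 := by
  rw [(hasDerivAt_einsteinWeylProfile κ s).deriv, einsteinWeylProfile]
  have ha : √(κ ^ 2 + 4 * c) ^ 2 = κ ^ 2 + 4 * c := sq_sqrt (by positivity)
  have hs : √c ^ 2 = c := sq_sqrt hc.le
  have hX := cosh_sq (√c * s)
  generalize √(κ ^ 2 + 4 * c) = a at *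
  generalize √c * s = X at *
  generalize √c = r at *
  field_simp
  linear_combination a ^ 2 * sinh X ^ 2 * hs - a ^ 2 * c * hX - c * ha

end EinsteinWeylProfile

/-- Let `c > 0`, `κ ∈ ℝ` and `u(s) = c⁻¹·(√(κ² + 4c)·cosh(√c·s) + κ)`. Then `u > 0`
everywhere, `u(s) → +∞` as `s → ±∞`, and `(u′)² = c·u² − 2κ·u − 4`. -/
theorem stmt13 (c κ : ℝ) (hc : 0 < c) (u : ℝ → ℝ)
    (hu : ∀ s : ℝ, u s = c⁻¹ * (Real.sqrt (κ ^ 2 + 4 * c) * Real.cosh (Real.sqrt c * s) + κ)) :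
    (∀ s : ℝ, 0 < u s)
    ∧ Tendsto u atTop atTop
    ∧ Tendsto u atBot atTop
    ∧ ∀ s : ℝ, (deriv u s) ^ 2 = c * u s ^ 2 - 2 * κ * u s - 4 := by
  obtain rfl : u = einsteinWeylProfile c κ := funext hu
  exact ⟨einsteinWeylProfile_pos κ hc, tendsto_einsteinWeylProfile_atTop κ hc,
    tendsto_einsteinWeylProfile_atBot κ hc, deriv_einsteinWeylProfile_sq κ hc⟩
end

section
/- Let c < 0 and κ < 0 be real numbers with κ² + 4c > 0, and define u : ℝ → ℝ by u(s) = c^(−1)·( κ − √(κ² + 4c)·cos(√(−c)·s) ). Then u(s) > 0 for all s, u is periodic with period 2π/√(−c), and u satisfies the differential equation (u′(s))² = c·u(s)² − 2κ·u(s) − 4 for all s ∈ ℝ. -/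
open Real

noncomputable def cosineProfile (c κ A b : ℝ) (s : ℝ) : ℝ :=
  c⁻¹ * (κ - A * cos (b * s))

namespace cosineProfile

variable {c κ A b : ℝ}

theorem pos (hc : c < 0) (hκA : κ + |A| < 0) (s : ℝ) : 0 < cosineProfile c κ A b s := by
  have hAcos : -|A| ≤ A * cos (b * s) := by
    calc -|A| = -(|A| * 1) := by ring
      _ ≤ -(|A| * |cos (b * s)|) := by gcongr; exact abs_cos_le_one _
      _ ≤ A * cos (b * s) := by rw [← abs_mul]; exact neg_abs_le _
  exact mul_pos_of_neg_of_neg (inv_neg''.mpr hc) (by linarith)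

theorem periodic : Function.Periodic (cosineProfile c κ A b) (2 * π / b) := by
  have h := (cos_periodic.const_mul b).comp fun y => c⁻¹ * (κ - A * y)
  rwa [inv_mul_eq_div] at h

theorem hasDerivAt (s : ℝ) :
    HasDerivAt (cosineProfile c κ A b) (c⁻¹ * (A * (b * sin (b * s)))) s := by
  have hcos : HasDerivAt (fun s => cos (b * s)) (-sin (b * s) * b) s :=
    (hasDerivAt_cos (b * s)).comp s ((hasDerivAt_id s).const_mul b |>.congr_deriv (mul_one b))
  exact (((hasDerivAt_const s κ).sub (hcos.const_mul A)).const_mul c⁻¹).congr_deriv (by ring)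

/-- Both sides equal `c⁻¹ A² (cos² (b s) − 1)`. -/
theorem deriv_sq (hc : c ≠ 0) (hb : b ^ 2 = -c) (hA : A ^ 2 = κ ^ 2 + 4 * c) (s : ℝ) :
    deriv (cosineProfile c κ A b) s ^ 2 =
      c * cosineProfile c κ A b s ^ 2 - 2 * κ * cosineProfile c κ A b s - 4 := by
  rw [(hasDerivAt s).deriv, cosineProfile]
  field_simp
  linear_combination (-c) * hA + A ^ 2 * sin (b * s) ^ 2 * hb
    - c * A ^ 2 * sin_sq_add_cos_sq (b * s)

end cosineProfile

/-- Let `c < 0` and `κ < 0` with `κ² + 4c > 0`, and let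
`u(s) = c⁻¹·(κ − √(κ² + 4c)·cos(√(−c)·s))`. Then `u > 0` everywhere, `u` is periodic
with period `2π/√(−c)`, and `(u′)² = c·u² − 2κ·u − 4`. -/
theorem stmt14 (c κ : ℝ) (hc : c < 0) (hκ : κ < 0) (hd : 0 < κ ^ 2 + 4 * c) (u : ℝ → ℝ)
    (hu : ∀ s : ℝ,
      u s = c⁻¹ * (κ - Real.sqrt (κ ^ 2 + 4 * c) * Real.cos (Real.sqrt (-c) * s))) :
    (∀ s : ℝ, 0 < u s)
    ∧ Function.Periodic u (2 * π / Real.sqrt (-c))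
    ∧ ∀ s : ℝ, (deriv u s) ^ 2 = c * u s ^ 2 - 2 * κ * u s - 4 := by
  obtain rfl : u = cosineProfile c κ √(κ ^ 2 + 4 * c) √(-c) := funext hu
  have hA_lt : |√(κ ^ 2 + 4 * c)| < -κ := by
    rw [abs_of_nonneg (sqrt_nonneg _), ← abs_of_neg hκ, ← sqrt_sq_eq_abs]
    exact sqrt_lt_sqrt hd.le (by linarith)
  refine ⟨cosineProfile.pos hc (by linarith), cosineProfile.periodic, ?_⟩
  exact cosineProfile.deriv_sq hc.ne (sq_sqrt (by linarith)) (sq_sqrt hd.le)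
end

section
/- Let α ∈ (0, π) and let Ω = { (x, y) ∈ ℝ² : y²·cos α − x·y·sin α < 0 }. Define u : Ω → ℝ by u(x, y) = −( −( y²·cos α − x·y·sin α ) )^(1/3), the real cube root of y²·cos α − x·y·sin α. Then u is smooth and negative on Ω and satisfies the Monge–Ampère equation 27·u⁴·( u_xx·u_yy − (u_xy)² ) = sin² α at every point of Ω. -/
open Real

/-- The function `u(x,y) = −(−(y²·cos α − x·y·sin α))^(1/3)`, the real cube root of
`y²·cos α − x·y·sin α`. -/
noncomputable def uAff (α x y : ℝ) : ℝ :=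
  -(-(y ^ 2 * Real.cos α - x * y * Real.sin α)) ^ ((1 : ℝ) / 3)

/-- Second partial derivative `u_xx`. -/
noncomputable def uAffxx (α x y : ℝ) : ℝ :=
  deriv (fun x' : ℝ => deriv (fun x'' : ℝ => uAff α x'' y) x') x

/-- Second partial derivative `u_yy`. -/
noncomputable def uAffyy (α x y : ℝ) : ℝ :=
  deriv (fun y' : ℝ => deriv (fun y'' : ℝ => uAff α x y'') y') y

/-- Mixed second partial derivative `u_xy`. -/
noncomputable def uAffxy (α x y : ℝ) : ℝ :=
  deriv (fun y' : ℝ => deriv (fun x' : ℝ => uAff α x' y') x) y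

lemma hasDerivAt_base_x (α x y : ℝ) :
    HasDerivAt (fun t : ℝ => -(y ^ 2 * Real.cos α - t * y * Real.sin α)) (y * Real.sin α) x := by
  have h0 : (fun t : ℝ => -(y ^ 2 * Real.cos α - t * y * Real.sin α))
      = fun t : ℝ => t * (y * Real.sin α) - y ^ 2 * Real.cos α := by funext t; ring
  rw [h0]
  simpa using ((hasDerivAt_id x).mul_const (y * Real.sin α)).sub_const (y ^ 2 * Real.cos α)

lemma hasDerivAt_base_y (α x y : ℝ) :
    HasDerivAt (fun t : ℝ => -(t ^ 2 * Real.cos α - x * t * Real.sin α))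
      (x * Real.sin α - 2 * y * Real.cos α) y := by
  have ha : HasDerivAt (fun t : ℝ => t ^ 2 * Real.cos α) (2 * y ^ 1 * Real.cos α) y :=
    (hasDerivAt_pow 2 y).mul_const _
  have hb : HasDerivAt (fun t : ℝ => x * t * Real.sin α) (x * Real.sin α) y := by
    have h0 : (fun t : ℝ => x * t * Real.sin α) = fun t : ℝ => t * (x * Real.sin α) := by
      funext t; ring
    rw [h0]; simpa using (hasDerivAt_id y).mul_const (x * Real.sin α)
  have := (ha.fun_sub hb).fun_neg
  refine this.congr_deriv ?_; ring

lemma hasDerivAt_uAff_x (α x y : ℝ) (h : 0 < -(y ^ 2 * Real.cos α - x * y * Real.sin α)) :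
    HasDerivAt (fun t => uAff α t y)
      (-(1/3 * (-(y ^ 2 * Real.cos α - x * y * Real.sin α)) ^ ((1:ℝ)/3 - 1) * (y * Real.sin α))) x := by
  have := ((hasDerivAt_base_x α x y).rpow_const (p := (1:ℝ)/3) (Or.inl h.ne')).fun_neg
  refine this.congr_deriv ?_
  ring

lemma hasDerivAt_uAff_y (α x y : ℝ) (h : 0 < -(y ^ 2 * Real.cos α - x * y * Real.sin α)) :
    HasDerivAt (fun t => uAff α x t)
      (-(1/3 * (-(y ^ 2 * Real.cos α - x * y * Real.sin α)) ^ ((1:ℝ)/3 - 1)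
        * (x * Real.sin α - 2 * y * Real.cos α))) y := by
  have := ((hasDerivAt_base_y α x y).rpow_const (p := (1:ℝ)/3) (Or.inl h.ne')).fun_neg
  refine this.congr_deriv ?_
  ring

lemma ev_pos_x (α x y : ℝ) (h : 0 < -(y ^ 2 * Real.cos α - x * y * Real.sin α)) :
    ∀ᶠ x' in nhds x, 0 < -(y ^ 2 * Real.cos α - x' * y * Real.sin α) := by
  have hc : Continuous fun x' : ℝ => -(y ^ 2 * Real.cos α - x' * y * Real.sin α) := by
    continuity
  have := hc.continuousAt (x := x) |>.eventually_mem (isOpen_Ioi.mem_nhds h)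
  simpa using this

lemma ev_pos_y (α x y : ℝ) (h : 0 < -(y ^ 2 * Real.cos α - x * y * Real.sin α)) :
    ∀ᶠ y' in nhds y, 0 < -(y' ^ 2 * Real.cos α - x * y' * Real.sin α) := by
  have hc : Continuous fun y' : ℝ => -(y' ^ 2 * Real.cos α - x * y' * Real.sin α) := by
    continuity
  have := hc.continuousAt (x := y) |>.eventually_mem (isOpen_Ioi.mem_nhds h)
  simpa using this

lemma uAffxx_eq (α x y : ℝ) (h : 0 < -(y ^ 2 * Real.cos α - x * y * Real.sin α)) :
    uAffxx α x y =
      -(1/3 * (((1:ℝ)/3 - 1) * (-(y ^ 2 * Real.cos α - x * y * Real.sin α)) ^ ((1:ℝ)/3 - 1 - 1)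
        * (y * Real.sin α)) * (y * Real.sin α)) := by
  have hev : (fun x' : ℝ => deriv (fun x'' : ℝ => uAff α x'' y) x') =ᶠ[nhds x]
      (fun x' : ℝ => -(1/3 * (-(y ^ 2 * Real.cos α - x' * y * Real.sin α)) ^ ((1:ℝ)/3 - 1)
        * (y * Real.sin α))) :=
    (ev_pos_x α x y h).mono fun x' hx' => (hasDerivAt_uAff_x α x' y hx').deriv
  have hF : HasDerivAt (fun x' : ℝ => -(1/3 * (-(y ^ 2 * Real.cos α - x' * y * Real.sin α)) ^ ((1:ℝ)/3 - 1)
        * (y * Real.sin α)))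
      (-(1/3 * (((1:ℝ)/3 - 1) * (-(y ^ 2 * Real.cos α - x * y * Real.sin α)) ^ ((1:ℝ)/3 - 1 - 1)
        * (y * Real.sin α)) * (y * Real.sin α))) x := by
    have := ((((hasDerivAt_base_x α x y).rpow_const (p := (1:ℝ)/3 - 1) (Or.inl h.ne')).const_mul
      (1/3 : ℝ)).mul_const (y * Real.sin α)).fun_neg
    refine this.congr_deriv ?_
    ring
  rw [uAffxx, hev.deriv_eq, hF.deriv]

lemma uAffyy_eq (α x y : ℝ) (h : 0 < -(y ^ 2 * Real.cos α - x * y * Real.sin α)) :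
    uAffyy α x y =
      -(1/3 * (((1:ℝ)/3 - 1) * (-(y ^ 2 * Real.cos α - x * y * Real.sin α)) ^ ((1:ℝ)/3 - 1 - 1)
          * (x * Real.sin α - 2 * y * Real.cos α)) * (x * Real.sin α - 2 * y * Real.cos α)
        + 1/3 * (-(y ^ 2 * Real.cos α - x * y * Real.sin α)) ^ ((1:ℝ)/3 - 1) * (-(2 * Real.cos α))) := by
  have hev : (fun y' : ℝ => deriv (fun y'' : ℝ => uAff α x y'') y') =ᶠ[nhds y]
      (fun y' : ℝ => -(1/3 * (-(y' ^ 2 * Real.cos α - x * y' * Real.sin α)) ^ ((1:ℝ)/3 - 1)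
        * (x * Real.sin α - 2 * y' * Real.cos α))) :=
    (ev_pos_y α x y h).mono fun y' hy' => (hasDerivAt_uAff_y α x y' hy').deriv
  have h1 : HasDerivAt (fun y' : ℝ => 1/3 * (-(y' ^ 2 * Real.cos α - x * y' * Real.sin α)) ^ ((1:ℝ)/3 - 1))
      (1/3 * (((1:ℝ)/3 - 1) * (-(y ^ 2 * Real.cos α - x * y * Real.sin α)) ^ ((1:ℝ)/3 - 1 - 1)
        * (x * Real.sin α - 2 * y * Real.cos α))) y := by
    have := ((hasDerivAt_base_y α x y).rpow_const (p := (1:ℝ)/3 - 1) (Or.inl h.ne')).const_mul (1/3 : ℝ)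
    refine this.congr_deriv ?_
    ring
  have h2 : HasDerivAt (fun y' : ℝ => x * Real.sin α - 2 * y' * Real.cos α) (-(2 * Real.cos α)) y := by
    have h0 : (fun y' : ℝ => x * Real.sin α - 2 * y' * Real.cos α)
        = fun y' : ℝ => x * Real.sin α - y' * (2 * Real.cos α) := by funext t; ring
    rw [h0]
    simpa using (hasDerivAt_const y (x * Real.sin α)).fun_sub ((hasDerivAt_id y).mul_const (2 * Real.cos α))
  have hF := (h1.fun_mul h2).fun_neg
  rw [uAffyy, hev.deriv_eq, hF.deriv]

lemma uAffxy_eq (α x y : ℝ) (h : 0 < -(y ^ 2 * Real.cos α - x * y * Real.sin α)) :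
    uAffxy α x y =
      -(1/3 * (((1:ℝ)/3 - 1) * (-(y ^ 2 * Real.cos α - x * y * Real.sin α)) ^ ((1:ℝ)/3 - 1 - 1)
          * (x * Real.sin α - 2 * y * Real.cos α)) * (y * Real.sin α)
        + 1/3 * (-(y ^ 2 * Real.cos α - x * y * Real.sin α)) ^ ((1:ℝ)/3 - 1) * Real.sin α) := by
  have hev : (fun y' : ℝ => deriv (fun x' : ℝ => uAff α x' y') x) =ᶠ[nhds y]
      (fun y' : ℝ => -(1/3 * (-(y' ^ 2 * Real.cos α - x * y' * Real.sin α)) ^ ((1:ℝ)/3 - 1)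
        * (y' * Real.sin α))) :=
    (ev_pos_y α x y h).mono fun y' hy' => (hasDerivAt_uAff_x α x y' hy').deriv
  have h1 : HasDerivAt (fun y' : ℝ => 1/3 * (-(y' ^ 2 * Real.cos α - x * y' * Real.sin α)) ^ ((1:ℝ)/3 - 1))
      (1/3 * (((1:ℝ)/3 - 1) * (-(y ^ 2 * Real.cos α - x * y * Real.sin α)) ^ ((1:ℝ)/3 - 1 - 1)
        * (x * Real.sin α - 2 * y * Real.cos α))) y := by
    have := ((hasDerivAt_base_y α x y).rpow_const (p := (1:ℝ)/3 - 1) (Or.inl h.ne')).const_mul (1/3 : ℝ)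
    refine this.congr_deriv ?_
    ring
  have h2 : HasDerivAt (fun y' : ℝ => y' * Real.sin α) (Real.sin α) y := by
    simpa using (hasDerivAt_id y).mul_const (Real.sin α)
  have hF := (h1.fun_mul h2).fun_neg
  rw [uAffxy, hev.deriv_eq, hF.deriv]

/-- For `α ∈ (0, π)` and `Ω = {(x,y) : y²·cos α − x·y·sin α < 0}`, the function
`u(x,y) = −(−(y²·cos α − x·y·sin α))^(1/3)` is smooth and negative on `Ω` and satisfies
`27·u⁴·(u_xx·u_yy − u_xy²) = sin²α` at every point of `Ω`. -/
theorem stmt17 (α : ℝ) (hα : α ∈ Set.Ioo 0 π) :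
    ContDiffOn ℝ (⊤ : ℕ∞) (fun p : ℝ × ℝ => uAff α p.1 p.2)
      {p : ℝ × ℝ | p.2 ^ 2 * Real.cos α - p.1 * p.2 * Real.sin α < 0}
    ∧ ∀ x y : ℝ, y ^ 2 * Real.cos α - x * y * Real.sin α < 0 →
        uAff α x y < 0
        ∧ 27 * uAff α x y ^ 4 *
            (uAffxx α x y * uAffyy α x y - uAffxy α x y ^ 2) = Real.sin α ^ 2 := by
  constructor
  · intro p hp
    have hb : 0 < -(p.2 ^ 2 * Real.cos α - p.1 * p.2 * Real.sin α) := by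
      simp only [Set.mem_setOf_eq] at hp; linarith
    have hg : ContDiff ℝ (⊤ : ℕ∞)
        (fun q : ℝ × ℝ => -(q.2 ^ 2 * Real.cos α - q.1 * q.2 * Real.sin α)) := by fun_prop
    have hca : ContDiffAt ℝ (⊤ : ℕ∞) (fun p : ℝ × ℝ => uAff α p.1 p.2) p := by
      simp only [uAff]
      exact (hg.contDiffAt.rpow_const_of_ne hb.ne').neg
    exact hca.contDiffWithinAt
  · intro x y hxy
    have hb : 0 < -(y ^ 2 * Real.cos α - x * y * Real.sin α) := by linarith
    constructor
    · have := Real.rpow_pos_of_pos hb ((1:ℝ)/3)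
      simp only [uAff]
      linarith
    · have h2 : ((-(y ^ 2 * Real.cos α - x * y * Real.sin α)) ^ ((1:ℝ)/3)) ^ 4
          * (-(y ^ 2 * Real.cos α - x * y * Real.sin α)) ^ ((1:ℝ)/3 - 1 - 1)
          * (-(y ^ 2 * Real.cos α - x * y * Real.sin α)) ^ ((1:ℝ)/3 - 1)
          * (-(y ^ 2 * Real.cos α - x * y * Real.sin α)) = 1 := by
        rw [← Real.rpow_natCast ((-(y ^ 2 * Real.cos α - x * y * Real.sin α)) ^ ((1:ℝ)/3)) 4,
          ← Real.rpow_mul hb.le, ← Real.rpow_add hb, ← Real.rpow_add hb,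
          ← Real.rpow_add_one hb.ne']
        norm_num
      have h3 : ((-(y ^ 2 * Real.cos α - x * y * Real.sin α)) ^ ((1:ℝ)/3)) ^ 4
          * ((-(y ^ 2 * Real.cos α - x * y * Real.sin α)) ^ ((1:ℝ)/3 - 1)) ^ 2 = 1 := by
        rw [← Real.rpow_natCast ((-(y ^ 2 * Real.cos α - x * y * Real.sin α)) ^ ((1:ℝ)/3)) 4,
          ← Real.rpow_mul hb.le,
          ← Real.rpow_natCast ((-(y ^ 2 * Real.cos α - x * y * Real.sin α)) ^ ((1:ℝ)/3 - 1)) 2,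
          ← Real.rpow_mul hb.le, ← Real.rpow_add hb]
        norm_num
      rw [uAffxx_eq α x y hb, uAffyy_eq α x y hb, uAffxy_eq α x y hb]
      simp only [uAff]
      linear_combination (4 * Real.sin α ^ 2) * h2 - (3 * Real.sin α ^ 2) * h3
end
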